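/- For all real numbers θ₀, x, y, θ with 0 ≤ y ≤ x ≤ 1, 0 ≤ θ₀ ≤ 1 and 0 ≤ θ ≤ 1, the pointwise inequality (w2t(θ) − w2a(θ)) + 2·(w1t(θ) − w1a(θ)) ≥ 0 holds. -/

import Mathlib

/-- Truthful utility of a 2-type attacker of per-item value θ₀ against a 1-type adversary
of value θ. -/
noncomputable def w1t (θ₀ θ : ℝ) : ℝ := if θ ≤ 2 * θ₀ then 2 * θ₀ - θ else 0

/-- Attack utility (bids (1,x),(1,y)) against a 1-type adversary of value θ. -/
noncomputable def w1a (θ₀ y θ : ℝ) : ℝ := if θ ≤ y then 2 * θ₀ - 2 * θ else -y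

/-- Truthful utility against a 2-type adversary of per-item value θ. -/
noncomputable def w2t (θ₀ θ : ℝ) : ℝ := if θ ≤ θ₀ then 2 * θ₀ - 2 * θ else 0

/-- Attack utility (bids (1,x),(1,y)) against a 2-type adversary of per-item value θ. -/
noncomputable def w2a (θ₀ x y θ : ℝ) : ℝ :=
  if θ ≤ y / 2 then 2 * θ₀
  else if θ ≤ x / 2 then 2 * θ₀ - 2 * θ + y
  else if θ ≤ (x + y) / 2 then 2 * θ₀ - 4 * θ + y + x
  else 0

/-!
Write the truthful utilities as `w1t = max (2θ₀ - θ) 0` and `w2t = max (2θ₀ - 2θ) 0`.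
If `θ ≤ y`, the attack loses at least `θ` against a one-item adversary and gains at most `2θ`
against a two-item one, since it never earns more than the value `2θ₀` of both items.
Otherwise the attack pays `y` against a one-item adversary, and against a two-item one it
gains at most `y`, because `w2a ≤ max (2θ₀ - 2θ + y) 0`.
-/

theorem w1t_eq_max (θ₀ θ : ℝ) : w1t θ₀ θ = max (2 * θ₀ - θ) 0 := by
  unfold w1t
  split_ifs with h
  · exact (max_eq_left (by linarith)).symm
  · exact (max_eq_right (by linarith)).symm

theorem w2t_eq_max (θ₀ θ : ℝ) : w2t θ₀ θ = max (2 * θ₀ - 2 * θ) 0 := by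
  unfold w2t
  split_ifs with h
  · exact (max_eq_left (by linarith)).symm
  · exact (max_eq_right (by linarith)).symm

theorem w2a_le_two_mul {θ₀ : ℝ} (hθ₀ : 0 ≤ θ₀) (x y θ : ℝ) :
    w2a θ₀ x y θ ≤ 2 * θ₀ := by
  unfold w2a
  split_ifs <;> linarith

theorem w2a_le_max (θ₀ x y θ : ℝ) : w2a θ₀ x y θ ≤ max (2 * θ₀ - 2 * θ + y) 0 := by
  unfold w2a
  split_ifs <;> first | exact le_max_right _ _ | exact le_max_of_le_left (by linarith)

theorem max_add_le_max_add {a y : ℝ} (hy : 0 ≤ y) : max (a + y) 0 ≤ max a 0 + y :=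
  max_le (by linarith [le_max_left a 0]) (by linarith [le_max_right a 0])

theorem stmt_3_general (θ₀ x y θ : ℝ) (hy : 0 ≤ y) (hθ₀ : 0 ≤ θ₀) :
    (w2t θ₀ θ - w2a θ₀ x y θ) + 2 * (w1t θ₀ θ - w1a θ₀ y θ) ≥ 0 := by
  rw [w1t_eq_max, w2t_eq_max]
  by_cases hθy : θ ≤ y
  · have hw1a : w1a θ₀ y θ = 2 * θ₀ - 2 * θ := if_pos hθy
    have hw2a := w2a_le_two_mul hθ₀ x y θ
    linarith [le_max_left (2 * θ₀ - θ) 0, le_max_left (2 * θ₀ - 2 * θ) 0]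
  · have hw1a : w1a θ₀ y θ = -y := if_neg hθy
    have hw2a := (w2a_le_max θ₀ x y θ).trans (max_add_le_max_add (a := 2 * θ₀ - 2 * θ) hy)
    linarith [le_max_right (2 * θ₀ - θ) 0]

theorem stmt_3 (θ₀ x y θ : ℝ) (hy : 0 ≤ y) (hyx : y ≤ x) (hx : x ≤ 1)
    (hθ₀ : 0 ≤ θ₀) (hθ₀1 : θ₀ ≤ 1) (hθ0 : 0 ≤ θ) (hθ1 : θ ≤ 1) :
    (w2t θ₀ θ - w2a θ₀ x y θ) + 2 * (w1t θ₀ θ - w1a θ₀ y θ) ≥ 0 :=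
  stmt_3_general θ₀ x y θ hy hθ₀
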